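/- arXiv:1105.0392 — 3 statements merged into one kernel-verified Lean document; each statement's English description precedes it below -/
import Mathlib

section
/- Let F be a finite family of nonempty closed bounded intervals in ℝ and let s ≤ e be real numbers with [s,e] ⊆ ⋃ F. Define the greedy sequence by u₀ = s and, as long as u_j < e, u_{j+1} = max { sup I : I ∈ F, u_j ∈ I }. Then the greedy sequence is strictly increasing until it first reaches a value ≥ e, it does so after finitely many steps, and if g is the least index with u_g ≥ e, then (i) there is a tracking cover of [s,e] of size g, and (ii) every tracking cover of [s,e] has size at least g. In other words, the greedy algorithm produces a tracking cover of minimum possible size. -/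
/-- A tracking cover of `[s, e]` of size `m` with respect to a finite family `F` of closed
bounded intervals in `ℝ` (an interval being represented by its pair of endpoints):
times `s = t₀ ≤ t₁ ≤ … ≤ t_m = e` together with intervals `I₁, …, I_m ∈ F` such that
`[t_{j-1}, t_j] ⊆ I_j` for each `j`. -/
def IsTrackingCover (F : Finset (ℝ × ℝ)) (s e : ℝ) (m : ℕ) : Prop :=
  ∃ (t : ℕ → ℝ) (I : ℕ → ℝ × ℝ),
    t 0 = s ∧ t m = e ∧ (∀ j < m, t j ≤ t (j + 1)) ∧
    ∀ j < m, I j ∈ F ∧ Set.Icc (t j) (t (j + 1)) ⊆ Set.Icc (I j).1 (I j).2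

/-- The greedy algorithm solves the offline tracking problem optimally: starting at `u 0 = s`
and, as long as `u j < e`, jumping to `u (j+1) = max { sup I : I ∈ F, u j ∈ I }`, the greedy
sequence is strictly increasing until it first reaches a value `≥ e`, it does so after finitely
many steps, and if `g` is the least such index then there is a tracking cover of size `g`,
while every tracking cover of `[s, e]` has size at least `g`. -/
theorem greedy_optimal_offline_tracking
    (F : Finset (ℝ × ℝ)) (hne : ∀ p ∈ F, p.1 ≤ p.2)
    (s e : ℝ) (hse : s ≤ e)
    (hcov : Set.Icc s e ⊆ ⋃ p ∈ F, Set.Icc p.1 p.2)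
    (u : ℕ → ℝ) (hu0 : u 0 = s)
    (hrec : ∀ j, u j < e →
      (∃ p ∈ F, u j ∈ Set.Icc p.1 p.2 ∧ u (j + 1) = p.2) ∧
      (∀ p ∈ F, u j ∈ Set.Icc p.1 p.2 → p.2 ≤ u (j + 1))) :
    ∃ g : ℕ, (∀ j < g, u j < e ∧ u j < u (j + 1)) ∧ e ≤ u g ∧
      IsTrackingCover F s e g ∧ ∀ m : ℕ, IsTrackingCover F s e m → g ≤ m := by
  classical
  -- Strict increase while below e
  have hstep : ∀ j, s ≤ u j → u j < e → u j < u (j + 1) := by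
    intro j hsj hje
    obtain ⟨hexj, hmax⟩ := hrec j hje
    set a := u j with ha
    set T := (F.filter (fun p => a < p.1)).image Prod.fst with hT
    set b := min e (if h : T.Nonempty then T.min' h else e) with hb
    have hac : ∀ x ∈ T, a < x := by
      intro x hx
      simp only [hT, Finset.mem_image, Finset.mem_filter] at hx
      obtain ⟨p, ⟨_, h⟩, rfl⟩ := hx
      exact h
    have hab : a < b := by
      rw [hb]
      refine lt_min hje ?_
      split_ifs with h
      · exact hac _ (T.min'_mem h)
      · exact hje
    have hbe : b ≤ e := min_le_left _ _
    have hxI : (a + b) / 2 ∈ Set.Icc s e := ⟨by linarith, by linarith⟩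
    obtain ⟨p, hpF, hp1, hp2⟩ : ∃ p ∈ F, p.1 ≤ (a + b) / 2 ∧ (a + b) / 2 ≤ p.2 := by
      have := hcov hxI
      simp only [Set.mem_iUnion, Set.mem_Icc] at this
      obtain ⟨p, hpF, h1, h2⟩ := this
      exact ⟨p, hpF, h1, h2⟩
    have hp1a : p.1 ≤ a := by
      by_contra h
      push_neg at h
      have hTne : T.Nonempty :=
        ⟨p.1, Finset.mem_image.2 ⟨p, Finset.mem_filter.2 ⟨hpF, h⟩, rfl⟩⟩
      have h1 : T.min' hTne ≤ p.1 :=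
        T.min'_le _ (Finset.mem_image.2 ⟨p, Finset.mem_filter.2 ⟨hpF, h⟩, rfl⟩)
      have h2 : b ≤ T.min' hTne := by
        rw [hb, dif_pos hTne]; exact min_le_right _ _
      linarith
    have := hmax p hpF ⟨hp1a, by linarith⟩
    linarith
  -- the greedy sequence eventually reaches e
  have hgex : ∃ g, e ≤ u g := by
    by_contra h
    push_neg at h
    have hsall : ∀ n, s ≤ u n := by
      intro n
      induction n with
      | zero => simp [hu0]
      | succ n ih => exact (ih.trans_lt (hstep n ih (h n))).le
    have hmono : StrictMono u := strictMono_nat_of_lt_succ fun n => hstep n (hsall n) (h n)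
    have hinj : Function.Injective fun n : ℕ => u (n + 1) := by
      intro a b hab
      have := hmono.injective hab
      omega
    have hfin : (Set.range fun n : ℕ => u (n + 1)).Finite := by
      apply (F.image Prod.snd).finite_toSet.subset
      rintro x ⟨n, rfl⟩
      obtain ⟨⟨p, hpF, _, hpe⟩, _⟩ := hrec n (h n)
      exact Finset.mem_coe.2 (Finset.mem_image.2 ⟨p, hpF, hpe.symm⟩)
    exact (Set.infinite_range_of_injective hinj) hfin
  set g := Nat.find hgex with hgdef
  have hge : e ≤ u g := Nat.find_spec hgex
  have hlt : ∀ j < g, u j < e := fun j hj => lt_of_not_ge (Nat.find_min hgex hj)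
  have hsle : ∀ j, j ≤ g → s ≤ u j := by
    intro j hj
    induction j with
    | zero => simp [hu0]
    | succ n ih =>
      have hn : n < g := hj
      exact ((ih hn.le).trans_lt (hstep n (ih hn.le) (hlt n hn))).le
  refine ⟨g, fun j hj => ⟨hlt j hj, hstep j (hsle j hj.le) (hlt j hj)⟩, hge, ?_, ?_⟩
  · -- the greedy sequence gives a tracking cover of size g
    refine ⟨fun j => min (u j) e,
      fun j => if h : u j < e then (hrec j h).1.choose else (0, 0), ?_, ?_, ?_, ?_⟩
    · simp [hu0, min_eq_left hse]
    · simp [min_eq_right hge]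
    · intro j hj
      have h1 : u j < e := hlt j hj
      have h2 : u j < u (j + 1) := hstep j (hsle j hj.le) h1
      simp only [min_eq_left h1.le]
      exact le_min h2.le h1.le
    · intro j hj
      have h1 : u j < e := hlt j hj
      obtain ⟨hpF, hpm, hpe⟩ := (hrec j h1).1.choose_spec
      simp only [dif_pos h1]
      refine ⟨hpF, Set.Icc_subset_Icc ?_ ?_⟩
      · rw [min_eq_left h1.le]; exact hpm.1
      · exact (min_le_left _ _).trans hpe.le
  · -- optimality: any tracking cover has size at least g
    rintro m ⟨t, I, ht0, htm, htmono, hcov'⟩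
    by_contra hm
    push_neg at hm
    have hlt' : ∀ j, j ≤ m → u j < e := fun j hj => hlt j (lt_of_le_of_lt hj hm)
    have key : ∀ j, j ≤ m → t j ≤ u j := by
      intro j hj
      induction j with
      | zero => rw [ht0, hu0]
      | succ n ih =>
        have hn : n < m := hj
        have ihn := ih hn.le
        have hue : u n < e := hlt' n hn.le
        have hsn : s ≤ u n := hsle n (hn.trans hm).le
        by_cases hc : u n ≤ t (n + 1)
        · obtain ⟨hIF, hIsub⟩ := hcov' n hn
          have hun : u n ∈ Set.Icc (I n).1 (I n).2 := hIsub ⟨ihn, hc⟩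
          have h2 := (hrec n hue).2 (I n) hIF hun
          have h3 : t (n + 1) ∈ Set.Icc (I n).1 (I n).2 :=
            hIsub ⟨htmono n hn, le_refl _⟩
          exact h3.2.trans h2
        · push_neg at hc
          exact hc.le.trans (hstep n hsn hue).le
    have hfin := key m le_rfl
    rw [htm] at hfin
    exact absurd hfin (not_le.2 (hlt' m le_rfl))
end

section
/- Let C be a finite family of c ≥ 1 closed bounded intervals in ℝ, all containing a common point p, whose left endpoints are pairwise distinct and whose right endpoints are pairwise distinct. Then there exists an interval I = [a,b] ∈ C such that the number of intervals J ∈ C with J ≠ I and a ∈ J is at most c/2, and the number of intervals J ∈ C with J ≠ I and b ∈ J is at most c/2. -/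
/-- Existence of a good interval: if `C` is a finite family of `c ≥ 1` closed bounded
intervals in `ℝ` (represented by their endpoint pairs), all containing a common point `p`,
with pairwise distinct left endpoints and pairwise distinct right endpoints, then some
interval `I = [a, b] ∈ C` satisfies that at most `c/2` members of `C` other than `I`
contain `a`, and at most `c/2` members of `C` other than `I` contain `b`. -/
theorem exists_good_interval (C : Finset (ℝ × ℝ)) (hc : 1 ≤ C.card) (p : ℝ)
    (hmem : ∀ q ∈ C, p ∈ Set.Icc q.1 q.2)
    (hleft : ∀ q ∈ C, ∀ q' ∈ C, q.1 = q'.1 → q = q')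
    (hright : ∀ q ∈ C, ∀ q' ∈ C, q.2 = q'.2 → q = q') :
    ∃ I ∈ C,
      ((C.filter (fun J => J ≠ I ∧ I.1 ∈ Set.Icc J.1 J.2)).card : ℝ) ≤ (C.card : ℝ) / 2 ∧
      ((C.filter (fun J => J ≠ I ∧ I.2 ∈ Set.Icc J.1 J.2)).card : ℝ) ≤ (C.card : ℝ) / 2 := by
  classical
  set c := C.card with hcdef
  set rL : ℝ × ℝ → ℕ := fun I => (C.filter (fun J => J.1 < I.1)).card with hrL
  set rR : ℝ × ℝ → ℕ := fun I => (C.filter (fun J => I.2 < J.2)).card with hrR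
  -- rank functions are < c on C
  have hrLlt : ∀ I ∈ C, rL I < c := by
    intro I hI
    apply Finset.card_lt_card
    refine ⟨Finset.filter_subset _ _, fun hsub => ?_⟩
    have := Finset.mem_filter.mp (hsub hI)
    exact lt_irrefl _ this.2
  have hrRlt : ∀ I ∈ C, rR I < c := by
    intro I hI
    apply Finset.card_lt_card
    refine ⟨Finset.filter_subset _ _, fun hsub => ?_⟩
    have := Finset.mem_filter.mp (hsub hI)
    exact lt_irrefl _ this.2
  -- injectivity of ranks on C
  have hLinj : ∀ I ∈ C, ∀ I' ∈ C, rL I = rL I' → I = I' := by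
    intro I hI I' hI' h
    rcases lt_trichotomy I.1 I'.1 with hlt | heq | hlt
    · exfalso
      have : (C.filter (fun J => J.1 < I.1)) ⊂ (C.filter (fun J => J.1 < I'.1)) := by
        refine ⟨?_, ?_⟩
        · intro J hJ
          have := Finset.mem_filter.mp hJ
          exact Finset.mem_filter.mpr ⟨this.1, this.2.trans hlt⟩
        · intro hsub
          have hmemI : I ∈ C.filter (fun J => J.1 < I'.1) :=
            Finset.mem_filter.mpr ⟨hI, hlt⟩
          have := Finset.mem_filter.mp (hsub hmemI)
          exact lt_irrefl _ this.2
      have hcc := Finset.card_lt_card this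
      simp only [hrL, hrR] at h
      omega
    · exact hleft I hI I' hI' heq
    · exfalso
      have : (C.filter (fun J => J.1 < I'.1)) ⊂ (C.filter (fun J => J.1 < I.1)) := by
        refine ⟨?_, ?_⟩
        · intro J hJ
          have := Finset.mem_filter.mp hJ
          exact Finset.mem_filter.mpr ⟨this.1, this.2.trans hlt⟩
        · intro hsub
          have hmemI : I' ∈ C.filter (fun J => J.1 < I.1) :=
            Finset.mem_filter.mpr ⟨hI', hlt⟩
          have := Finset.mem_filter.mp (hsub hmemI)
          exact lt_irrefl _ this.2
      have hcc := Finset.card_lt_card this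
      simp only [hrL, hrR] at h
      omega
  have hRinj : ∀ I ∈ C, ∀ I' ∈ C, rR I = rR I' → I = I' := by
    intro I hI I' hI' h
    rcases lt_trichotomy I.2 I'.2 with hlt | heq | hlt
    · exfalso
      have : (C.filter (fun J => I'.2 < J.2)) ⊂ (C.filter (fun J => I.2 < J.2)) := by
        refine ⟨?_, ?_⟩
        · intro J hJ
          have := Finset.mem_filter.mp hJ
          exact Finset.mem_filter.mpr ⟨this.1, hlt.trans this.2⟩
        · intro hsub
          have hmemI : I' ∈ C.filter (fun J => I.2 < J.2) :=
            Finset.mem_filter.mpr ⟨hI', hlt⟩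
          have := Finset.mem_filter.mp (hsub hmemI)
          exact lt_irrefl _ this.2
      have hcc := Finset.card_lt_card this
      simp only [hrL, hrR] at h
      omega
    · exact hright I hI I' hI' heq
    · exfalso
      have : (C.filter (fun J => I.2 < J.2)) ⊂ (C.filter (fun J => I'.2 < J.2)) := by
        refine ⟨?_, ?_⟩
        · intro J hJ
          have := Finset.mem_filter.mp hJ
          exact Finset.mem_filter.mpr ⟨this.1, hlt.trans this.2⟩
        · intro hsub
          have hmemI : I ∈ C.filter (fun J => I'.2 < J.2) :=
            Finset.mem_filter.mpr ⟨hI, hlt⟩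
          have := Finset.mem_filter.mp (hsub hmemI)
          exact lt_irrefl _ this.2
      have hcc := Finset.card_lt_card this
      simp only [hrL, hrR] at h
      omega
  -- bad sets
  set A : Finset (ℝ × ℝ) := C.filter (fun I => c < 2 * rL I) with hA
  set B : Finset (ℝ × ℝ) := C.filter (fun I => c < 2 * rR I) with hB
  have hAcard : A.card ≤ (Finset.Ico (c / 2 + 1) c).card := by
    apply Finset.card_le_card_of_injOn rL
    · intro I hI
      have hIm := Finset.mem_filter.mp hI
      have h1 : rL I < c := hrLlt I hIm.1
      have h2 : c < 2 * rL I := hIm.2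
      rw [Finset.mem_coe, Finset.mem_Ico]
      omega
    · intro I hI I' hI' h
      exact hLinj I (Finset.mem_filter.mp hI).1 I' (Finset.mem_filter.mp hI').1 h
  have hBcard : B.card ≤ (Finset.Ico (c / 2 + 1) c).card := by
    apply Finset.card_le_card_of_injOn rR
    · intro I hI
      have hIm := Finset.mem_filter.mp hI
      have h1 : rR I < c := hrRlt I hIm.1
      have h2 : c < 2 * rR I := hIm.2
      rw [Finset.mem_coe, Finset.mem_Ico]
      omega
    · intro I hI I' hI' h
      exact hRinj I (Finset.mem_filter.mp hI).1 I' (Finset.mem_filter.mp hI').1 h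
  have hIcoCard : (Finset.Ico (c / 2 + 1) c).card = c - (c / 2 + 1) := Nat.card_Ico _ _
  have hABlt : (A ∪ B).card < c := by
    have := Finset.card_union_le A B
    omega
  have hABsub : A ∪ B ⊆ C := by
    intro x hx
    rcases Finset.mem_union.mp hx with h | h
    · exact (Finset.mem_filter.mp h).1
    · exact (Finset.mem_filter.mp h).1
  obtain ⟨I, hIC, hInot⟩ : ∃ I ∈ C, I ∉ A ∪ B := by
    have hne : (C \ (A ∪ B)).Nonempty := by
      rw [← Finset.card_pos, Finset.card_sdiff_of_subset hABsub]
      omega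
    obtain ⟨I, hI⟩ := hne
    have := Finset.mem_sdiff.mp hI
    exact ⟨I, this.1, this.2⟩
  have hInA : I ∉ A := fun h => hInot (Finset.mem_union_left _ h)
  have hInB : I ∉ B := fun h => hInot (Finset.mem_union_right _ h)
  have hL2 : 2 * rL I ≤ c := by
    by_contra h
    exact hInA (Finset.mem_filter.mpr ⟨hIC, by omega⟩)
  have hR2 : 2 * rR I ≤ c := by
    by_contra h
    exact hInB (Finset.mem_filter.mpr ⟨hIC, by omega⟩)
  refine ⟨I, hIC, ?_, ?_⟩
  · have hfeq : C.filter (fun J => J ≠ I ∧ I.1 ∈ Set.Icc J.1 J.2)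
        = C.filter (fun J => J.1 < I.1) := by
      apply Finset.filter_congr
      intro J hJ
      simp only [Set.mem_Icc]
      constructor
      · rintro ⟨hne, hle, _⟩
        rcases lt_or_eq_of_le hle with h | h
        · exact h
        · exact absurd (hleft J hJ I hIC h) hne
      · intro hlt
        refine ⟨fun heq => by rw [heq] at hlt; exact lt_irrefl _ hlt,
          le_of_lt hlt, ?_⟩
        have h1 := (hmem I hIC).1
        have h2 := (hmem J hJ).2
        linarith
    rw [hfeq]
    have : (rL I : ℝ) ≤ (c : ℝ) / 2 := by
      rw [le_div_iff₀ (by norm_num : (0:ℝ) < 2)]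
      exact_mod_cast by linarith [hL2] 
    exact this
  · have hfeq : C.filter (fun J => J ≠ I ∧ I.2 ∈ Set.Icc J.1 J.2)
        = C.filter (fun J => I.2 < J.2) := by
      apply Finset.filter_congr
      intro J hJ
      simp only [Set.mem_Icc]
      constructor
      · rintro ⟨hne, _, hle⟩
        rcases lt_or_eq_of_le hle with h | h
        · exact h
        · exact absurd (hright J hJ I hIC h.symm) hne
      · intro hlt
        refine ⟨fun heq => by rw [heq] at hlt; exact lt_irrefl _ hlt, ?_,
          le_of_lt hlt⟩
        have h1 := (hmem I hIC).2
        have h2 := (hmem J hJ).1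
        linarith
    rw [hfeq]
    have : (rR I : ℝ) ≤ (c : ℝ) / 2 := by
      rw [le_div_iff₀ (by norm_num : (0:ℝ) < 2)]
      exact_mod_cast by linarith [hR2]
    exact this
end

section
/- For every integer n ≥ 3 there exist a real number r ∈ (0,1) and a real number ε > 0 such that, setting c_j = (r·cos(2πj/n), r·sin(2πj/n)) ∈ ℝ² for j = 0, 1, …, n−1 and x_i = (−ε·cos(2πi/n), −ε·sin(2πi/n)) ∈ ℝ² for i = 0, 1, …, n−1, the following hold (with the Euclidean norm): (i) ‖c_j‖ < 1 for every j (the origin lies in the interior of every unit disk centered at c_j); (ii) ‖x_i − c_i‖ > 1 for every i (the point x_i lies outside the unit disk centered at c_i); and (iii) ‖x_i − c_j‖ < 1 for every pair j ≠ i (the point x_i lies inside every other unit disk). -/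
open Real

private lemma flower_norm_sub (a b c d : ℝ) :
    ‖((WithLp.equiv 2 (Fin 2 → ℝ)).symm ![a,b] : EuclideanSpace ℝ (Fin 2)) -
      (WithLp.equiv 2 (Fin 2 → ℝ)).symm ![c,d]‖ = Real.sqrt ((a-c)^2 + (b-d)^2) := by
  rw [EuclideanSpace.norm_eq]
  simp [Fin.sum_univ_two, Real.norm_eq_abs, sq_abs]

private lemma flower_norm (a b : ℝ) :
    ‖((WithLp.equiv 2 (Fin 2 → ℝ)).symm ![a,b] : EuclideanSpace ℝ (Fin 2))‖
      = Real.sqrt (a^2 + b^2) := by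
  rw [EuclideanSpace.norm_eq]
  simp [Fin.sum_univ_two, Real.norm_eq_abs, sq_abs]

private lemma flower_cos_le (α θ : ℝ) (hα0 : 0 < α) (hαπ : α ≤ π) (h1 : α ≤ θ)
    (h2 : θ ≤ 2*π - α) : Real.cos θ ≤ Real.cos α := by
  rcases le_or_gt θ π with h | h
  · exact Real.cos_le_cos_of_nonneg_of_le_pi hα0.le h h1
  · rw [show θ = 2*π - (2*π - θ) by ring, Real.cos_two_pi_sub]
    exact Real.cos_le_cos_of_nonneg_of_le_pi hα0.le (by linarith) (by linarith)

private lemma flower_cos_aux (n i j : ℕ) (hn : 3 ≤ n) (hi : i < n) (hj : j < i) :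
    Real.cos (2*π*i/n - 2*π*j/n) ≤ Real.cos (2*π/n) := by
  have hn0 : (0:ℝ) < n := by positivity
  have hπ := Real.pi_pos
  have hk1 : (1:ℝ) ≤ (i:ℝ) - j := by
    have : (j:ℝ) + 1 ≤ i := by exact_mod_cast hj
    linarith
  have hk2 : (i:ℝ) - j ≤ (n:ℝ) - 1 := by
    have : (i:ℝ) + 1 ≤ n := by exact_mod_cast hi
    linarith
  have hθ : 2*π*i/n - 2*π*j/n = 2*π*((i:ℝ)-j)/n := by ring
  rw [hθ]
  have hn3 : (3:ℝ) ≤ n := by exact_mod_cast hn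
  apply flower_cos_le
  · positivity
  · rw [div_le_iff₀ hn0]; nlinarith
  · rw [show 2*π/(n:ℝ) = 2*π*1/n by ring]
    gcongr
  · rw [show 2*π - 2*π/(n:ℝ) = 2*π*((n:ℝ)-1)/n by field_simp]
    gcongr

private lemma flower_cos_diff (n i j : ℕ) (hn : 3 ≤ n) (hi : i < n) (hj : j < n)
    (hij : j ≠ i) : Real.cos (2*π*i/n - 2*π*j/n) ≤ Real.cos (2*π/n) := by
  rcases lt_or_gt_of_ne hij with h | h
  · exact flower_cos_aux n i j hn hi h
  · rw [show 2*π*i/n - 2*π*j/n = -(2*π*j/n - 2*π*i/n) by ring, Real.cos_neg]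
    exact flower_cos_aux n j i hn hj h

/-- The flower construction: for every `n ≥ 3` there are `r ∈ (0,1)` and `ε > 0` such that,
with `c j = (r cos(2πj/n), r sin(2πj/n))` the centers of `n` unit disks equally spaced on the
circle of radius `r`, and `x i = (−ε cos(2πi/n), −ε sin(2πi/n))`, the origin lies in the
interior of every unit disk (`‖c j‖ < 1`), the point `x i` lies outside the `i`-th unit disk
(`‖x i − c i‖ > 1`), and `x i` lies inside each of the other unit disks (`‖x i − c j‖ < 1`
for `j ≠ i`), all with respect to the Euclidean norm on `ℝ²`. -/
theorem flower_construction (n : ℕ) (hn : 3 ≤ n) :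
    ∃ r ε : ℝ, 0 < r ∧ r < 1 ∧ 0 < ε ∧
      ∀ (c x : ℕ → EuclideanSpace ℝ (Fin 2)),
        (∀ j : ℕ, c j = (WithLp.equiv 2 (Fin 2 → ℝ)).symm
          ![r * Real.cos (2 * Real.pi * j / n), r * Real.sin (2 * Real.pi * j / n)]) →
        (∀ i : ℕ, x i = (WithLp.equiv 2 (Fin 2 → ℝ)).symm
          ![-(ε * Real.cos (2 * Real.pi * i / n)), -(ε * Real.sin (2 * Real.pi * i / n))]) →
        (∀ j < n, ‖c j‖ < 1) ∧
        (∀ i < n, 1 < ‖x i - c i‖) ∧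
        (∀ i < n, ∀ j < n, j ≠ i → ‖x i - c j‖ < 1) := by
  have hπ := Real.pi_pos
  have hn0 : (0:ℝ) < n := by positivity
  have hn3 : (3:ℝ) ≤ n := by exact_mod_cast hn
  set A : ℝ := Real.cos (2*π/n) with hA
  have hαpos : 0 < 2*π/n := by positivity
  have hαlt : 2*π/n < π := by rw [div_lt_iff₀ hn0]; nlinarith
  have hA1 : A < 1 := by
    have := Real.cos_lt_cos_of_nonneg_of_le_pi le_rfl hαlt.le hαpos
    simpa using this
  have hA2 : -1 < A := by
    have := Real.cos_lt_cos_of_nonneg_of_le_pi (le_of_lt hαpos) le_rfl hαlt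
    simpa using this
  set δ : ℝ := 1 - A with hδ
  have hδ0 : 0 < δ := by simp [hδ]; linarith
  have hδ2 : δ < 2 := by simp [hδ]; linarith
  refine ⟨1/2 + δ/16, 1/2, by linarith, by linarith, by norm_num, ?_⟩
  intro c x hc hx
  set r : ℝ := 1/2 + δ/16 with hr
  have hr0 : 0 < r := by simp [hr]; linarith
  refine ⟨?_, ?_, ?_⟩
  · intro j hj
    rw [hc j, flower_norm]
    have hpy := Real.sin_sq_add_cos_sq (2*π*j/n)
    have : (r * Real.cos (2*π*j/n))^2 + (r * Real.sin (2*π*j/n))^2 = r^2 := by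
      linear_combination r^2 * hpy
    rw [this, Real.sqrt_sq hr0.le]
    simp [hr]; linarith
  · intro i hi
    rw [hx i, hc i, flower_norm_sub]
    have hpy := Real.sin_sq_add_cos_sq (2*π*i/n)
    have : (-(1/2 * Real.cos (2*π*i/n)) - r * Real.cos (2*π*i/n))^2 +
        (-(1/2 * Real.sin (2*π*i/n)) - r * Real.sin (2*π*i/n))^2 = (1/2 + r)^2 := by
      linear_combination (1/2 + r)^2 * hpy
    rw [this, Real.sqrt_sq (by linarith)]
    simp [hr]; linarith
  · intro i hi j hj hij
    rw [hx i, hc j, flower_norm_sub]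
    have hpyi := Real.sin_sq_add_cos_sq (2*π*i/n)
    have hpyj := Real.sin_sq_add_cos_sq (2*π*j/n)
    have hC : Real.cos (2*π*i/n) * Real.cos (2*π*j/n) +
        Real.sin (2*π*i/n) * Real.sin (2*π*j/n) ≤ A := by
      have := flower_cos_diff n i j hn hi hj hij
      rwa [Real.cos_sub] at this
    have hs : (-(1/2 * Real.cos (2*π*i/n)) - r * Real.cos (2*π*j/n))^2 +
        (-(1/2 * Real.sin (2*π*i/n)) - r * Real.sin (2*π*j/n))^2 < 1 := by
      have hrC : r * (Real.cos (2*π*i/n) * Real.cos (2*π*j/n) +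
          Real.sin (2*π*i/n) * Real.sin (2*π*j/n)) ≤ r * A :=
        mul_le_mul_of_nonneg_left hC hr0.le
      have hAδ : A = 1 - δ := by simp [hδ]
      have hexp : (-(1/2 * Real.cos (2*π*i/n)) - r * Real.cos (2*π*j/n))^2 +
          (-(1/2 * Real.sin (2*π*i/n)) - r * Real.sin (2*π*j/n))^2
          = 1/4 + r^2 + r * (Real.cos (2*π*i/n) * Real.cos (2*π*j/n) +
            Real.sin (2*π*i/n) * Real.sin (2*π*j/n)) := by
        linear_combination (1/4) * hpyi + r^2 * hpyj
      rw [hexp]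
      rw [hAδ] at hrC
      have hrδ : r = 1/2 + δ/16 := hr
      nlinarith [sq_nonneg δ]
    calc Real.sqrt _ < Real.sqrt 1 := by
          apply Real.sqrt_lt_sqrt (by positivity) hs
      _ = 1 := Real.sqrt_one
end
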